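/- arXiv:2207.12153 — 3 statements merged into one kernel-verified Lean document; each statement's English description precedes it below -/
import Mathlib

section
/- Let (Ω,T) be a compact metric space with a homeomorphism T, and A : Ω → SL(2,R) continuous, with cocycle iterates A_n(ω) = A(T^{n-1}ω)···A(ω). If there exist L > 0 and k ∈ ℕ such that M := max_{ω∈Ω} (1/k) log‖A_k(ω)‖ < L, then for all ω ∈ Ω and all n ≥ 2k·max_{ω∈Ω} log‖A(ω)‖ / (L − M), one has (1/n) log‖A_n(ω)‖ < L. -/
/-!
Along an orbit, `n ↦ log ‖A_n(ω)‖` is a subadditive cocycle, since the operator norm is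
submultiplicative. Cutting `n` into blocks of length `k` followed by fewer than `k` single steps
gives `log ‖A_n(ω)‖ ≤ n M + k c`, where `c = max log ‖A‖`; once `n (L - M) ≥ 2 k c` this is
`< n L`.
-/

open scoped Matrix.Norms.L2Operator

noncomputable abbrev SL2 := Matrix.SpecialLinearGroup (Fin 2) ℝ

noncomputable instance : MetricSpace SL2 :=
  MetricSpace.induced (fun B => (B : Matrix (Fin 2) (Fin 2) ℝ))
    (fun _ _ h => Subtype.ext h) inferInstance

/-- The `n`-step cocycle iterate `A_n(ω) = A(T^{n-1}ω) ⋯ A(ω)`. -/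
noncomputable def coc {Ω : Type*} (T : Ω → Ω) (A : Ω → SL2) : ℕ → Ω → SL2
  | 0, _ => 1
  | n + 1, ω => coc T A n (T ω) * A ω

/-- `log ‖A_n(ω)‖`, using the operator norm on 2×2 real matrices. -/
noncomputable def cocNorm {Ω : Type*} (T : Ω → Ω) (A : Ω → SL2) (n : ℕ) (ω : Ω) : ℝ :=
  Real.log ‖(coc T A n ω : Matrix (Fin 2) (Fin 2) ℝ)‖

/-- Uniform hyperbolicity: `liminf (1/n) log ‖A_n(ω)‖ ≥ L > 0` uniformly in `ω`. -/
def UniformlyHyperbolic {Ω : Type*} (T : Ω → Ω) (A : Ω → SL2) : Prop :=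
  ∃ L > (0 : ℝ), ∀ ε > (0 : ℝ), ∃ N : ℕ, ∀ n ≥ N, ∀ ω,
    L - ε < (1 / n : ℝ) * cocNorm T A n ω

/-- `(1/n) log ‖A_n(ω)‖ → L` uniformly in `ω`. -/
def TendsUniformlyToConst {Ω : Type*} (T : Ω → Ω) (A : Ω → SL2) (L : ℝ) : Prop :=
  ∀ ε > (0 : ℝ), ∃ N : ℕ, ∀ n ≥ N, ∀ ω,
    |(1 / n : ℝ) * cocNorm T A n ω - L| < ε

/-- A uniform cocycle. -/
def IsUniformCocycle {Ω : Type*} (T : Ω → Ω) (A : Ω → SL2) : Prop :=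
  ∃ L : ℝ, TendsUniformlyToConst T A L

/-- Uniform behavior: uniformly hyperbolic, or `(1/n) log ‖A_n(ω)‖ → 0` uniformly. -/
def HasUniformBehavior {Ω : Type*} (T : Ω → Ω) (A : Ω → SL2) : Prop :=
  UniformlyHyperbolic T A ∨ TendsUniformlyToConst T A 0

namespace Matrix

lemma norm_col_le_l2_opNorm {m n 𝕜 : Type*} [RCLike 𝕜] [Fintype m] [Fintype n] [DecidableEq n]
    (B : Matrix m n 𝕜) (j : n) : ‖WithLp.toLp 2 (B.col j)‖ ≤ ‖B‖ := by
  simpa [mulVec_single_one] using B.l2_opNorm_mulVec (EuclideanSpace.single j 1)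

lemma one_le_l2_opNorm_of_det_eq_one {B : Matrix (Fin 2) (Fin 2) ℝ} (hB : B.det = 1) :
    1 ≤ ‖B‖ := by
  set u := WithLp.toLp 2 (B.col 0)
  set v := WithLp.toLp 2 (B.col 1)
  -- Lagrange's identity `‖u‖²‖v‖² = det B ^ 2 + ⟪u, v⟫²` for the two columns.
  have hdet : 1 ≤ ‖u‖ * ‖v‖ := by
    rw [← hB, det_fin_two, EuclideanSpace.norm_eq, EuclideanSpace.norm_eq,
      ← Real.sqrt_mul (by positivity)]
    apply Real.le_sqrt_of_sq_le
    simp only [Fin.isValue, col_apply, Real.norm_eq_abs, sq_abs, Fin.sum_univ_two, u, v]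
    nlinarith [sq_nonneg (B 0 0 * B 0 1 + B 1 0 * B 1 1)]
  have hcols := mul_le_mul (B.norm_col_le_l2_opNorm 0) (B.norm_col_le_l2_opNorm 1)
    (norm_nonneg _) (norm_nonneg _)
  nlinarith [norm_nonneg B]

end Matrix

section SubadditiveCocycle

variable {Ω : Type*}

def IsSubadditiveCocycle (T : Ω → Ω) (f : ℕ → Ω → ℝ) : Prop :=
  ∀ m n ω, f (m + n) ω ≤ f m (T^[n] ω) + f n ω

namespace IsSubadditiveCocycle

variable {T : Ω → Ω} {f : ℕ → Ω → ℝ}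

lemma le_mul (hf : IsSubadditiveCocycle T f) (h0 : ∀ ω, f 0 ω ≤ 0) {c : ℝ}
    (hc : ∀ ω, f 1 ω ≤ c) (n : ℕ) (ω : Ω) : f n ω ≤ n * c := by
  induction n generalizing ω with
  | zero => simpa using h0 ω
  | succ n ih =>
    calc f (n + 1) ω ≤ f n (T ω) + f 1 ω := hf n 1 ω
      _ ≤ n * c + c := add_le_add (ih (T ω)) (hc ω)
      _ = (n + 1 : ℕ) * c := by push_cast; ring

lemma le_mul_add (hf : IsSubadditiveCocycle T f) {k : ℕ} (hk : 0 < k) {M c : ℝ} (hM0 : 0 ≤ M)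
    (hc0 : 0 ≤ c) (hM : ∀ ω, f k ω ≤ k * M) (h0 : ∀ ω, f 0 ω ≤ 0) (hc : ∀ ω, f 1 ω ≤ c)
    (n : ℕ) (ω : Ω) :
    f n ω ≤ n * M + k * c := by
  induction n using Nat.strong_induction_on generalizing ω with
  | _ n ih =>
    rcases lt_or_ge n k with hnk | hkn
    · calc f n ω ≤ n * c := hf.le_mul h0 hc n ω
        _ ≤ k * c := by gcongr
        _ ≤ n * M + k * c := le_add_of_nonneg_left (by positivity)
    · obtain ⟨m, rfl⟩ := Nat.exists_eq_add_of_le' hkn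
      calc f (m + k) ω ≤ f m (T^[k] ω) + f k ω := hf m k ω
        _ ≤ (m * M + k * c) + k * M := add_le_add (ih m (by omega) _) (hM ω)
        _ = (m + k : ℕ) * M + k * c := by push_cast; ring

end IsSubadditiveCocycle

end SubadditiveCocycle

section Cocycle

variable {Ω : Type*} (T : Ω → Ω) (A : Ω → SL2)

lemma coc_add (m n : ℕ) (ω : Ω) : coc T A (m + n) ω = coc T A m (T^[n] ω) * coc T A n ω := by
  induction n generalizing ω with
  | zero => simp [coc]
  | succ n ih => rw [← add_assoc, coc, coc, ih, mul_assoc, Function.iterate_succ_apply]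

lemma cocNorm_nonneg (n : ℕ) (ω : Ω) : 0 ≤ cocNorm T A n ω :=
  Real.log_nonneg (Matrix.one_le_l2_opNorm_of_det_eq_one (coc T A n ω).2)

lemma cocNorm_zero (ω : Ω) : cocNorm T A 0 ω = 0 := by
  simp [cocNorm, coc]

lemma cocNorm_one (ω : Ω) :
    cocNorm T A 1 ω = Real.log ‖(A ω : Matrix (Fin 2) (Fin 2) ℝ)‖ := by
  simp [cocNorm, coc]

lemma isSubadditiveCocycle_cocNorm : IsSubadditiveCocycle T (cocNorm T A) := by
  intro m n ω
  have hpos : ∀ B : SL2, 0 < ‖(B : Matrix (Fin 2) (Fin 2) ℝ)‖ := fun B =>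
    one_pos.trans_le (Matrix.one_le_l2_opNorm_of_det_eq_one B.2)
  set P := coc T A m (T^[n] ω)
  set Q := coc T A n ω
  calc cocNorm T A (m + n) ω = Real.log ‖(P : Matrix (Fin 2) (Fin 2) ℝ) * Q‖ := by
        rw [cocNorm, coc_add, Matrix.SpecialLinearGroup.coe_mul]
    _ ≤ Real.log (‖(P : Matrix (Fin 2) (Fin 2) ℝ)‖ * ‖(Q : Matrix (Fin 2) (Fin 2) ℝ)‖) :=
        Real.log_le_log (by simpa using hpos (P * Q)) (norm_mul_le _ _)
    _ = cocNorm T A m (T^[n] ω) + cocNorm T A n ω := Real.log_mul (hpos P).ne' (hpos Q).ne'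

end Cocycle

theorem lemma_aux_zwei_general {Ω : Type*} [MetricSpace Ω]
    (T : Ω ≃ₜ Ω) (A : Ω → SL2)
    (L M c : ℝ) (k : ℕ) (hk : 0 < k)
    (hM : IsGreatest {x : ℝ | ∃ ω, x = (1 / k : ℝ) * cocNorm (⇑T) A k ω} M)
    (hML : M < L)
    (hc : IsGreatest {x : ℝ | ∃ ω, x = Real.log ‖(A ω : Matrix (Fin 2) (Fin 2) ℝ)‖} c)
    (hc0 : 0 < c) :
    ∀ ω, ∀ n : ℕ, (2 * k * c) / (L - M) ≤ (n : ℝ) →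
      (1 / n : ℝ) * cocNorm (⇑T) A n ω < L := by
  intro ω n hn
  have hk' : (0 : ℝ) < k := by exact_mod_cast hk
  have hM0 : 0 ≤ M := by
    obtain ⟨ω₀, rfl⟩ := hM.1
    exact mul_nonneg (by positivity) (cocNorm_nonneg _ _ _ _)
  have hMk : ∀ ω, cocNorm T A k ω ≤ k * M := fun ω => by
    have h := hM.2 ⟨ω, rfl⟩
    rwa [one_div, inv_mul_le_iff₀ hk'] at h
  have hbound := (isSubadditiveCocycle_cocNorm T A).le_mul_add hk hM0 hc0.le hMk
    (fun ω => (cocNorm_zero T A ω).le)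
    (fun ω => (cocNorm_one T A ω).trans_le (hc.2 ⟨ω, rfl⟩)) n ω
  have hLM : 0 < L - M := sub_pos.mpr hML
  have hkc : 2 * k * c ≤ n * (L - M) := (div_le_iff₀ hLM).mp hn
  have hn0 : (0 : ℝ) < n := (div_pos (by positivity) hLM).trans_le hn
  rw [one_div, inv_mul_lt_iff₀ hn0]
  calc cocNorm T A n ω ≤ n * M + k * c := hbound
    _ < n * M + n * (L - M) := by linarith [mul_pos hk' hc0]
    _ = n * L := by ring

/-- Lemma 2.1: if `M := max_ω (1/k) log‖A_k(ω)‖ < L`, then `(1/n) log‖A_n(ω)‖ < L`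
for all `ω` and all `n ≥ 2k·max_ω log‖A(ω)‖ / (L - M)`. -/
theorem lemma_aux_zwei {Ω : Type*} [MetricSpace Ω] [CompactSpace Ω] [Nonempty Ω]
    (T : Ω ≃ₜ Ω) (A : Ω → SL2)
    (hA : Continuous fun ω => (A ω : Matrix (Fin 2) (Fin 2) ℝ))
    (L M c : ℝ) (hL : 0 < L) (k : ℕ) (hk : 0 < k)
    (hM : IsGreatest {x : ℝ | ∃ ω, x = (1 / k : ℝ) * cocNorm (⇑T) A k ω} M)
    (hML : M < L)
    (hc : IsGreatest {x : ℝ | ∃ ω, x = Real.log ‖(A ω : Matrix (Fin 2) (Fin 2) ℝ)‖} c)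
    (hc0 : 0 < c) :
    ∀ ω, ∀ n : ℕ, (2 * k * c) / (L - M) ≤ (n : ℝ) →
      (1 / n : ℝ) * cocNorm (⇑T) A n ω < L :=
  lemma_aux_zwei_general T A L M c k hk hM hML hc hc0
end

section
/- Let (Ω,T) be a dynamical system with ergodic measure μ, and for f ∈ C(Ω,ℝ) let Σ_f denote the almost sure spectrum of the Schrödinger operators H_ω with potential V_ω(n) = f(T^n ω). Then the map f ↦ Leb(Σ_f) is upper semi-continuous on C(Ω,ℝ): for every δ > 0, the set {f ∈ C(Ω,ℝ) : Leb(Σ_f) < δ} is open. -/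
open scoped Matrix.Norms.L2Operator
open Filter Topology MeasureTheory

/-! For every `ω`, `H_g(ω) - H_f(ω)` is multiplication by `(g - f)(Tⁿω)`, so its norm is at most
`‖g - f‖`. If `A` is self-adjoint and `dist(z, σ(A)) ≥ ε`, then `‖(A - z)⁻¹‖ ≤ ε⁻¹`, so no
perturbation of `A` of norm `< ε` has `z` in its spectrum: `σ(B) ⊆ thickening ε σ(A)`. Taking `ω`
typical for both `f` and `g` gives `Σ_g ⊆ thickening ε Σ_f`. As `Σ_f` is compact and Lebesgue
measure is outer regular, such a thickening lies in an open set of measure `< δ` for small `ε`.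

The estimate `‖B x‖ ≥ d ‖x‖` for a self-adjoint `B` whose spectrum avoids `(-d, d)` goes by real
induction on a lower bound `m < d`: then `±m ∉ σ(B)`, so the positive operator `B² - m²` is
invertible, hence coercive by Cauchy–Schwarz, and `m` can be increased. -/

open scoped InnerProductSpace lp

namespace ContinuousLinearMap

variable {E : Type*} [NormedAddCommGroup E] [InnerProductSpace ℝ E]

theorem IsPositive.norm_apply_sq_le {P : E →L[ℝ] E} (hP : P.IsPositive) (x : E) :
    ‖P x‖ ^ 2 ≤ ‖P‖ * ⟪P x, x⟫_ℝ := by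
  have hsymm : ((innerₗ E).comp P.toLinearMap).IsSymm :=
    ⟨fun x y => show ⟪P x, y⟫_ℝ = ⟪P y, x⟫_ℝ by
      rw [hP.inner_left_eq_inner_right, real_inner_comm]⟩
  have hcs := LinearMap.BilinForm.apply_sq_le_of_symm _ hP.inner_nonneg_left hsymm x (P x)
  simp only [LinearMap.comp_apply, coe_coe, innerₗ_apply_apply,
    real_inner_self_eq_norm_sq] at hcs
  have hPPx : ⟪P (P x), P x⟫_ℝ ≤ ‖P‖ * ‖P x‖ ^ 2 :=
    (real_inner_le_norm _ _).trans (by nlinarith [P.le_opNorm (P x), norm_nonneg (P x)])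
  rcases (sq_nonneg ‖P x‖).eq_or_lt with hPx | hPx
  · rw [← hPx]
    exact mul_nonneg P.opNorm_nonneg (hP.inner_nonneg_left x)
  · refine le_of_mul_le_mul_right ?_ hPx
    nlinarith [mul_le_mul_of_nonneg_left hPPx (hP.inner_nonneg_left x)]

theorem IsPositive.exists_pos_mul_norm_sq_le_inner {P : E →L[ℝ] E} (hP : P.IsPositive)
    (hunit : IsUnit P) : ∃ c > 0, ∀ x, c * ‖x‖ ^ 2 ≤ ⟪P x, x⟫_ℝ := by
  obtain ⟨u, rfl⟩ := hunit
  set K := ‖(↑u⁻¹ : E →L[ℝ] E)‖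
  refine ⟨(K ^ 2 * ‖(u : E →L[ℝ] E)‖ + 1)⁻¹, by positivity, fun x => ?_⟩
  have hx : ‖x‖ ≤ K * ‖(u : E →L[ℝ] E) x‖ :=
    calc ‖x‖ = ‖(↑u⁻¹ : E →L[ℝ] E) ((u : E →L[ℝ] E) x)‖ := by
          rw [← mul_apply_eq_comp, u.inv_mul, one_apply_eq_self]
      _ ≤ K * ‖(u : E →L[ℝ] E) x‖ := le_opNorm _ _
  have hux := hP.norm_apply_sq_le x
  have hnonneg := hP.inner_nonneg_left x
  rw [inv_mul_le_iff₀ (by positivity)]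
  nlinarith [mul_le_mul hx hx (norm_nonneg x) (by positivity), sq_nonneg K]

end ContinuousLinearMap

namespace IsSelfAdjoint

open ContinuousLinearMap

variable {E : Type*} [NormedAddCommGroup E] [InnerProductSpace ℝ E] [CompleteSpace E]

theorem exists_gt_mul_norm_le_norm_apply {B : E →L[ℝ] E} (hB : IsSelfAdjoint B) {m : ℝ}
    (hm : 0 ≤ m) (hm₁ : m ∉ spectrum ℝ B) (hm₂ : -m ∉ spectrum ℝ B)
    (hbound : ∀ x, m * ‖x‖ ≤ ‖B x‖) : ∃ m' > m, ∀ x, m' * ‖x‖ ≤ ‖B x‖ := by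
  set P : E →L[ℝ] E := B ^ 2 - algebraMap ℝ _ (m ^ 2)
  have hfactor : P = (algebraMap ℝ _ m - B) * (algebraMap ℝ _ (-m) - B) := by
    simp only [P, map_neg, sq, sub_mul, mul_sub, mul_neg, ← map_mul, Algebra.commutes m B]
    abel
  have hinner : ∀ x, ⟪P x, x⟫_ℝ = ‖B x‖ ^ 2 - m ^ 2 * ‖x‖ ^ 2 := fun x => by
    have hsymm := hB.isSymmetric (B x) x
    simp only [coe_coe] at hsymm
    simp [P, sq, Algebra.algebraMap_eq_smul_one, inner_sub_left, real_inner_smul_left, hsymm]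
  have hP : P.IsPositive := (isPositive_iff' P).2
    ⟨(hB.pow 2).sub (.algebraMap _ (.all _)), fun x => by
      rw [hinner]; nlinarith [hbound x, norm_nonneg x, mul_nonneg hm (norm_nonneg x)]⟩
  obtain ⟨c, hc, hcP⟩ := hP.exists_pos_mul_norm_sq_le_inner
    (hfactor ▸ (spectrum.notMem_iff.1 hm₁).mul (spectrum.notMem_iff.1 hm₂))
  refine ⟨√(m ^ 2 + c), Real.lt_sqrt hm |>.2 (by linarith), fun x => ?_⟩
  rw [← pow_le_pow_iff_left₀ (by positivity) (norm_nonneg _) two_ne_zero, mul_pow,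
    Real.sq_sqrt (by positivity)]
  linarith [hcP x, hinner x]

theorem mul_norm_le_norm_apply {B : E →L[ℝ] E} (hB : IsSelfAdjoint B) {d : ℝ}
    (hd : ∀ t ∈ spectrum ℝ B, d ≤ |t|) (x : E) : d * ‖x‖ ≤ ‖B x‖ := by
  rcases le_or_gt d 0 with hd0 | hd0
  · exact (mul_nonpos_of_nonpos_of_nonneg hd0 (norm_nonneg x)).trans (norm_nonneg _)
  set s := {c : ℝ | ∀ x, c * ‖x‖ ≤ ‖B x‖}
  have hs : IsClosed s := by
    simp only [s, Set.ofPred_forall]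
    exact isClosed_iInter fun x => isClosed_le (by fun_prop) continuous_const
  suffices d ∈ s from this x
  refine (hs.inter isClosed_Icc).mem_of_ge_of_forall_exists_gt (a := 0) (by simp [s]) hd0.le ?_
  rintro c ⟨hc, hc0, hcd⟩
  have hnot : ∀ t, |t| = c → t ∉ spectrum ℝ B := fun t ht hmem => (hd t hmem).not_gt (ht ▸ hcd)
  obtain ⟨c', hcc', hc'⟩ := hB.exists_gt_mul_norm_le_norm_apply hc0
    (hnot c (abs_of_nonneg hc0)) (hnot (-c) (by rw [abs_neg, abs_of_nonneg hc0])) hc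
  exact ⟨min c' d, fun x => (mul_le_mul_of_nonneg_right (min_le_left _ _) (norm_nonneg x)).trans
    (hc' x), lt_min hcc' hcd, min_le_right _ _⟩

theorem spectrum_subset_thickening {A B : E →L[ℝ] E} (hA : IsSelfAdjoint A) {ε : ℝ}
    (h : ‖B - A‖ < ε) : spectrum ℝ B ⊆ Metric.thickening ε (spectrum ℝ A) := by
  nontriviality E using spectrum.of_subsingleton
  intro z hzB
  by_contra hzA
  have hε : 0 < ε := (norm_nonneg _).trans_lt h
  have hgap : ∀ t ∈ spectrum ℝ (A - algebraMap ℝ _ z), ε ≤ |t| := by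
    rw [← spectrum.sub_singleton_eq]
    rintro _ ⟨s, hs, _, rfl, rfl⟩
    by_contra! hlt
    exact hzA (Metric.mem_thickening_iff.2 ⟨s, hs, by rwa [Real.dist_eq, abs_sub_comm]⟩)
  have hbound := (hA.sub (.algebraMap _ (.all z))).mul_norm_le_norm_apply hgap
  obtain ⟨u, hu⟩ : IsUnit (A - algebraMap ℝ _ z) := by
    by_contra hAz
    exact (hgap 0 ((spectrum.zero_mem_iff ℝ).2 hAz)).not_gt (by simpa using hε)
  have hinv : ‖(↑u⁻¹ : E →L[ℝ] E)‖ ≤ ε⁻¹ := opNorm_le_bound _ (inv_nonneg.2 hε.le) fun y => by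
    have := hbound ((↑u⁻¹ : E →L[ℝ] E) y)
    rwa [← hu, ← mul_apply_eq_comp, u.mul_inv, one_apply_eq_self, ← le_inv_mul_iff₀ hε] at this
  have hnear : ‖(B - algebraMap ℝ _ z) - u‖ < ‖(↑u⁻¹ : E →L[ℝ] E)‖⁻¹ := by
    rw [hu, sub_sub_sub_cancel_right]
    exact h.trans_le ((le_inv_comm₀ hε (Units.norm_pos _)).2 hinv)
  exact spectrum.mem_iff.1 hzB (by simpa using (u.ofNearby _ hnear).isUnit.neg)

end IsSelfAdjoint

namespace lp

variable {α 𝕜 E : Type*} [RCLike 𝕜] [NormedAddCommGroup E] [InnerProductSpace 𝕜 E]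

def compEquiv (e : α ≃ α) (x : ℓ²(α, E)) : ℓ²(α, E) :=
  ⟨fun i => x (e i), memℓp_gen <| e.summable_iff.2 <| (lp.memℓp x).summable (by norm_num)⟩

@[simp] theorem compEquiv_apply (e : α ≃ α) (x : ℓ²(α, E)) (i : α) :
    (compEquiv e x : α → E) i = x (e i) := rfl

theorem inner_compEquiv (e : α ≃ α) (x y : ℓ²(α, E)) :
    ⟪compEquiv e x, y⟫_𝕜 = ⟪x, compEquiv e.symm y⟫_𝕜 := by
  simp only [lp.inner_eq_tsum, compEquiv_apply]
  simpa only [Equiv.symm_apply_apply] using e.tsum_eq fun i => ⟪x i, y (e.symm i)⟫_𝕜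

variable {p : ENNReal} [Fact (1 ≤ p)]

theorem opNorm_le_of_apply_eq_mul {D : ℓ^p(α, 𝕜) →L[𝕜] ℓ^p(α, 𝕜)} {v : α → 𝕜} {c : ℝ}
    (hc : 0 ≤ c) (hv : ∀ i, ‖v i‖ ≤ c) (hD : ∀ x i, D x i = v i * x i) : ‖D‖ ≤ c :=
  D.opNorm_le_bound hc fun x => by
    have hp : p ≠ 0 := (zero_lt_one.trans_le Fact.out).ne'
    calc ‖D x‖ ≤ ‖(c : 𝕜) • x‖ := lp.norm_mono hp fun i => by
          rw [hD, lp.coeFn_smul, Pi.smul_apply, norm_smul, norm_mul, RCLike.norm_ofReal,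
            abs_of_nonneg hc]
          exact mul_le_mul_of_nonneg_right (hv i) (norm_nonneg _)
      _ = c * ‖x‖ := by rw [norm_smul, RCLike.norm_ofReal, abs_of_nonneg hc]

end lp

def IsSchrodingerOperator (A : ℓ²(ℤ, ℝ) →L[ℝ] ℓ²(ℤ, ℝ)) (V : ℤ → ℝ) : Prop :=
  ∀ ψ n, A ψ n = ψ (n + 1) + ψ (n - 1) + V n * ψ n

namespace IsSchrodingerOperator

variable {A B : ℓ²(ℤ, ℝ) →L[ℝ] ℓ²(ℤ, ℝ)} {V W : ℤ → ℝ}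

theorem isSelfAdjoint (hA : IsSchrodingerOperator A V) : IsSelfAdjoint A := by
  rw [ContinuousLinearMap.isSelfAdjoint_iff_isSymmetric]
  intro ψ φ
  simp only [ContinuousLinearMap.coe_coe]
  set e := Equiv.addRight (1 : ℤ)
  -- `A = S + S⁻¹ + V` for the shift `S = lp.compEquiv e`, whose adjoint is `S⁻¹`
  have hmul (χ : ℓ²(ℤ, ℝ)) (n : ℤ) :
      (A χ - lp.compEquiv e χ - lp.compEquiv e.symm χ) n = V n * χ n := by
    simp only [lp.coeFn_sub, Pi.sub_apply, hA χ n, lp.compEquiv_apply, e, Equiv.coe_addRight,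
      Equiv.addRight_symm, ← sub_eq_add_neg]
    ring
  have hpot : ⟪A ψ - lp.compEquiv e ψ - lp.compEquiv e.symm ψ, φ⟫_ℝ
      = ⟪ψ, A φ - lp.compEquiv e φ - lp.compEquiv e.symm φ⟫_ℝ := by
    simp only [lp.inner_eq_tsum, hmul]
    refine tsum_congr fun n => ?_
    simp only [RCLike.inner_apply, Real.ringHom_apply]
    ring
  calc ⟪A ψ, φ⟫_ℝ = ⟪lp.compEquiv e ψ, φ⟫_ℝ + ⟪lp.compEquiv e.symm ψ, φ⟫_ℝ
        + ⟪A ψ - lp.compEquiv e ψ - lp.compEquiv e.symm ψ, φ⟫_ℝ := by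
        rw [← inner_add_left, ← inner_add_left]; congr 1; abel
    _ = ⟪ψ, lp.compEquiv e.symm φ⟫_ℝ + ⟪ψ, lp.compEquiv e φ⟫_ℝ
        + ⟪ψ, A φ - lp.compEquiv e φ - lp.compEquiv e.symm φ⟫_ℝ := by
        rw [lp.inner_compEquiv, lp.inner_compEquiv, Equiv.symm_symm, hpot]
    _ = ⟪ψ, A φ⟫_ℝ := by
        rw [← inner_add_right, ← inner_add_right]; congr 1; abel

theorem norm_sub_le (hA : IsSchrodingerOperator A V) (hB : IsSchrodingerOperator B W) {c : ℝ}
    (hVW : ∀ n, |V n - W n| ≤ c) : ‖A - B‖ ≤ c :=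
  lp.opNorm_le_of_apply_eq_mul ((abs_nonneg _).trans (hVW 0)) hVW fun ψ n => by
    rw [sub_apply, lp.coeFn_sub, Pi.sub_apply, hA, hB]
    ring

end IsSchrodingerOperator

theorem upperSemicontinuous_measure_spectrum_general {Ω : Type*} [MetricSpace Ω]
    [CompactSpace Ω] [MeasurableSpace Ω]
    (T : Ω ≃ₜ Ω) (μ : Measure Ω) [IsProbabilityMeasure μ]
    (H : C(Ω, ℝ) → Ω → (lp (fun _ : ℤ => ℝ) 2 →L[ℝ] lp (fun _ : ℤ => ℝ) 2))
    (hH : ∀ (f : C(Ω, ℝ)) (ω : Ω) (ψ : lp (fun _ : ℤ => ℝ) 2) (n : ℤ),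
      (H f ω ψ : ∀ _ : ℤ, ℝ) n = ψ (n + 1) + ψ (n - 1) + f ((T.toEquiv ^ n) ω) * ψ n)
    (Spec : C(Ω, ℝ) → Set ℝ)
    (hSpec : ∀ f : C(Ω, ℝ), ∀ᵐ ω ∂μ, spectrum ℝ (H f ω) = Spec f) :
    ∀ δ : ENNReal, 0 < δ → IsOpen {f : C(Ω, ℝ) | volume (Spec f) < δ} := by
  intro δ _
  refine Metric.isOpen_iff.2 fun f (hf : volume (Spec f) < δ) => ?_
  have hschr (g : C(Ω, ℝ)) (ω : Ω) :
      IsSchrodingerOperator (H g ω) (fun n => g ((T.toEquiv ^ n) ω)) := hH g ω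
  obtain ⟨ω₀, hω₀⟩ := (hSpec f).exists
  obtain ⟨U, hfU, hU, hUδ⟩ := Set.exists_isOpen_lt_of_lt _ _ hf
  obtain ⟨ε, hε, hεU⟩ :=
    (hω₀ ▸ spectrum.isCompact (H f ω₀)).exists_thickening_subset_open hU hfU
  refine ⟨ε, hε, fun g (hg : dist g f < ε) => ?_⟩
  obtain ⟨ω, hωf, hωg⟩ := ((hSpec f).and (hSpec g)).exists
  have hclose : ‖H g ω - H f ω‖ < ε :=
    ((hschr g ω).norm_sub_le (hschr f ω) fun n => (g - f).norm_coe_le_norm _).trans_lt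
      (dist_eq_norm g f ▸ hg)
  have hgU : Spec g ⊆ U := by
    have := (hschr f ω).isSelfAdjoint.spectrum_subset_thickening hclose
    rw [hωg, hωf] at this
    exact this.trans hεU
  exact (measure_mono hgU).trans_lt hUδ

/-- Proposition 5.1: the map `f ↦ Leb(Σ_f)` is upper semi-continuous: for every
`δ > 0`, the set `{f ∈ C(Ω,ℝ) : Leb(Σ_f) < δ}` is open.  Here `H f ω` is the
Schrödinger operator on `ℓ²(ℤ)` with potential `n ↦ f(Tⁿω)` and `Σ f` its
`μ`-almost sure spectrum. -/
theorem upperSemicontinuous_measure_spectrum {Ω : Type*} [MetricSpace Ω]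
    [CompactSpace Ω] [MeasurableSpace Ω] [BorelSpace Ω]
    (T : Ω ≃ₜ Ω) (μ : Measure Ω) [IsProbabilityMeasure μ] (hμ : Ergodic (⇑T) μ)
    (H : C(Ω, ℝ) → Ω → (lp (fun _ : ℤ => ℝ) 2 →L[ℝ] lp (fun _ : ℤ => ℝ) 2))
    (hH : ∀ (f : C(Ω, ℝ)) (ω : Ω) (ψ : lp (fun _ : ℤ => ℝ) 2) (n : ℤ),
      (H f ω ψ : ∀ _ : ℤ, ℝ) n = ψ (n + 1) + ψ (n - 1) + f ((T.toEquiv ^ n) ω) * ψ n)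
    (Spec : C(Ω, ℝ) → Set ℝ)
    (hSpec : ∀ f : C(Ω, ℝ), ∀ᵐ ω ∂μ, spectrum ℝ (H f ω) = Spec f) :
    ∀ δ : ENNReal, 0 < δ → IsOpen {f : C(Ω, ℝ) | volume (Spec f) < δ} :=
  upperSemicontinuous_measure_spectrum_general T μ H hH Spec hSpec
end

section
/- Let (Ω,T) be a non-uniquely ergodic dynamical system. Then there exists a continuous cocycle A : Ω → SL(2,R) that is uniformly hyperbolic but not uniform. -/
open scoped Matrix.Norms.L2Operator
open Filter Topology MeasureTheory

/-! For continuous `g ≥ 1`, the cocycle `A ω = diag(e^{g ω}, e^{-g ω})` satisfies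
`(1/n) log ‖A_n ω‖ = (1/n) ∑_{k<n} g (T^k ω) ≥ 1`, so it is uniformly hyperbolic. If these Birkhoff
averages converged uniformly to a constant `L`, integrating them against any invariant probability
measure would give `∫ g = L`. Two distinct ergodic measures are separated by some bounded continuous
function, which after adding a constant is a `g ≥ 1` with different integrals. -/

namespace MeasureTheory

variable {α E : Type*} [MeasurableSpace α] {μ : Measure α} [NormedAddCommGroup E]

theorem tendsto_integral_of_tendstoUniformly [NormedSpace ℝ E] [IsFiniteMeasure μ] {ι : Type*}
    {l : Filter ι} [l.IsCountablyGenerated] {F : ι → α → E} {f : α → E}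
    (hF : ∀ᶠ i in l, Integrable (F i) μ) (hf : Integrable f μ) (h : TendstoUniformly F f l) :
    Tendsto (fun i => ∫ x, F i x ∂μ) l (𝓝 (∫ x, f x ∂μ)) := by
  have h_bound : ∀ᶠ i in l, ∀ᵐ x ∂μ, ‖F i x‖ ≤ ‖f x‖ + 1 := by
    filter_upwards [Metric.tendstoUniformly_iff.mp h 1 one_pos] with i hi
    refine ae_of_all _ fun x => ?_
    calc ‖F i x‖ ≤ ‖f x‖ + ‖F i x - f x‖ := norm_le_norm_add_norm_sub' _ _
      _ ≤ ‖f x‖ + 1 := by rw [← dist_eq_norm, dist_comm]; linarith [hi x]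
  exact tendsto_integral_filter_of_dominated_convergence _
    (hF.mono fun _ hi => hi.aestronglyMeasurable) h_bound (hf.norm.add (integrable_const 1))
    (ae_of_all _ h.tendsto_at)

namespace MeasurePreserving

variable {T : α → α} {g : α → E}

theorem integrable_birkhoffSum (hT : MeasurePreserving T μ μ) (hg : Integrable g μ) (n : ℕ) :
    Integrable (birkhoffSum T g n) μ :=
  integrable_finsetSum _ fun k _ => (hT.iterate k).integrable_comp_of_integrable hg

theorem integral_birkhoffSum [NormedSpace ℝ E] (hT : MeasurePreserving T μ μ)
    (hg : Integrable g μ) (n : ℕ) : ∫ x, birkhoffSum T g n x ∂μ = n • ∫ x, g x ∂μ := by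
  have h_iterate (k : ℕ) : ∫ x, g (T^[k] x) ∂μ = ∫ x, g x ∂μ := by
    have hTk := hT.iterate k
    have hg' : AEStronglyMeasurable g (μ.map T^[k]) := by
      rw [hTk.map_eq]
      exact hg.aestronglyMeasurable
    rw [← integral_map hTk.aemeasurable hg', hTk.map_eq]
  have h_int (k : ℕ) : Integrable (fun x => g (T^[k] x)) μ :=
    (hT.iterate k).integrable_comp_of_integrable hg
  unfold birkhoffSum
  rw [integral_finsetSum _ fun k _ => h_int k]
  simp only [h_iterate, Finset.sum_const, Finset.card_range]

theorem integral_birkhoffAverage [NormedSpace ℝ E] (hT : MeasurePreserving T μ μ)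
    (hg : Integrable g μ) {n : ℕ} (hn : n ≠ 0) :
    ∫ x, birkhoffAverage ℝ T g n x ∂μ = ∫ x, g x ∂μ := by
  unfold birkhoffAverage
  rw [integral_smul, hT.integral_birkhoffSum hg, ← Nat.cast_smul_eq_nsmul ℝ,
    inv_smul_smul₀ (Nat.cast_ne_zero.mpr hn : (n : ℝ) ≠ 0)]

theorem integral_eq_of_tendstoUniformly_birkhoffAverage [NormedSpace ℝ E] [CompleteSpace E]
    [IsProbabilityMeasure μ] (hT : MeasurePreserving T μ μ) (hg : Integrable g μ) {c : E}
    (h : TendstoUniformly (birkhoffAverage ℝ T g) (fun _ => c) atTop) :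
    ∫ x, g x ∂μ = c := by
  have hlim := tendsto_integral_of_tendstoUniformly
    (Eventually.of_forall fun n => (hT.integrable_birkhoffSum hg n).smul _)
    (integrable_const c) h
  rw [integral_const, probReal_univ, one_smul] at hlim
  refine tendsto_nhds_unique (tendsto_const_nhds.congr' ?_) hlim
  filter_upwards [eventually_ne_atTop 0] with n hn
  exact (hT.integral_birkhoffAverage hg hn).symm

end MeasurePreserving

end MeasureTheory

theorem le_birkhoffAverage {α : Type*} {T : α → α} {g : α → ℝ} {c : ℝ} (hg : ∀ x, c ≤ g x)
    {n : ℕ} (hn : n ≠ 0) (x : α) : c ≤ birkhoffAverage ℝ T g n x := by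
  have hn' : (0 : ℝ) < n := Nat.cast_pos.mpr (Nat.pos_of_ne_zero hn)
  rw [birkhoffAverage, smul_eq_mul, le_inv_mul_iff₀ hn', birkhoffSum]
  simpa using Finset.card_nsmul_le_sum (Finset.range n) _ c fun k _ => hg (T^[k] x)

open scoped BoundedContinuousFunction in
theorem exists_boundedContinuousFunction_one_le_integral_ne {Ω : Type*} [TopologicalSpace Ω]
    [MeasurableSpace Ω] [HasOuterApproxClosed Ω] [BorelSpace Ω] {μ ν : Measure Ω}
    [IsProbabilityMeasure μ] [IsProbabilityMeasure ν] (h : μ ≠ ν) :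
    ∃ g : Ω →ᵇ ℝ, (∀ ω, 1 ≤ g ω) ∧ ∫ ω, g ω ∂μ ≠ ∫ ω, g ω ∂ν := by
  obtain ⟨f, hf⟩ : ∃ f : Ω →ᵇ ℝ, ∫ ω, f ω ∂μ ≠ ∫ ω, f ω ∂ν := by
    by_contra! h_eq
    exact h (ext_of_forall_integral_eq_of_IsFiniteMeasure h_eq)
  refine ⟨f + BoundedContinuousFunction.const Ω (‖f‖ + 1), fun ω => ?_, ?_⟩
  · have := neg_le_of_abs_le (f.norm_coe_le_norm ω)
    simp only [BoundedContinuousFunction.coe_add, Pi.add_apply,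
      BoundedContinuousFunction.const_apply]
    linarith
  · have h_shift (m : Measure Ω) [IsProbabilityMeasure m] :
        ∫ ω, (f + BoundedContinuousFunction.const Ω (‖f‖ + 1)) ω ∂m = ∫ ω, f ω ∂m + (‖f‖ + 1) := by
      simp [integral_add (f.integrable m) (integrable_const _)]
    rwa [h_shift, h_shift, Ne, add_left_inj]

noncomputable def expDiag (t : ℝ) : SL2 :=
  ⟨Matrix.diagonal ![Real.exp t, Real.exp (-t)], by
    simp [Matrix.det_diagonal, ← Real.exp_add]⟩

theorem coe_expDiag (t : ℝ) :
    (expDiag t : Matrix (Fin 2) (Fin 2) ℝ) = Matrix.diagonal ![Real.exp t, Real.exp (-t)] := rfl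

theorem expDiag_zero : expDiag 0 = 1 := by
  ext i j
  fin_cases i <;> fin_cases j <;> simp [coe_expDiag]

theorem expDiag_add (s t : ℝ) : expDiag (s + t) = expDiag s * expDiag t := by
  ext i j
  fin_cases i <;> fin_cases j <;> simp [coe_expDiag, Real.exp_add, mul_comm]

theorem continuous_expDiag : Continuous fun t => (expDiag t : Matrix (Fin 2) (Fin 2) ℝ) := by
  refine Continuous.matrix_diagonal (continuous_pi fun i => ?_)
  fin_cases i
  · exact Real.continuous_exp
  · exact Real.continuous_exp.comp continuous_neg

theorem norm_expDiag (t : ℝ) : ‖(expDiag t : Matrix (Fin 2) (Fin 2) ℝ)‖ = Real.exp |t| := by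
  rw [coe_expDiag, Matrix.l2_opNorm_diagonal, abs_eq_max_neg, Real.exp_monotone.map_max]
  simp [Pi.norm_def, Fin.univ_succ]

section

variable {Ω : Type*}

theorem coc_expDiag (T : Ω → Ω) (g : Ω → ℝ) (n : ℕ) (ω : Ω) :
    coc T (fun ω => expDiag (g ω)) n ω = expDiag (birkhoffSum T g n ω) := by
  induction n generalizing ω with
  | zero => exact expDiag_zero.symm
  | succ n ih => rw [coc, ih, birkhoffSum_succ', add_comm, expDiag_add]

theorem one_div_mul_cocNorm_expDiag (T : Ω → Ω) (g : Ω → ℝ) (n : ℕ) (ω : Ω) :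
    (1 / n : ℝ) * cocNorm T (fun ω => expDiag (g ω)) n ω = |birkhoffAverage ℝ T g n ω| := by
  rw [cocNorm, coc_expDiag, norm_expDiag, Real.log_exp, birkhoffAverage, smul_eq_mul, abs_mul,
    abs_inv, Nat.abs_cast, one_div]

theorem uniformlyHyperbolic_expDiag {T : Ω → Ω} {g : Ω → ℝ} {c : ℝ} (hc : 0 < c)
    (hg : ∀ ω, c ≤ g ω) : UniformlyHyperbolic T (fun ω => expDiag (g ω)) := by
  refine ⟨c, hc, fun ε hε => ⟨1, fun n hn ω => ?_⟩⟩
  rw [one_div_mul_cocNorm_expDiag]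
  calc c - ε < c := by linarith
    _ ≤ birkhoffAverage ℝ T g n ω := le_birkhoffAverage hg (by omega) ω
    _ ≤ _ := le_abs_self _

theorem tendsUniformlyToConst_iff {T : Ω → Ω} {A : Ω → SL2} {L : ℝ} :
    TendsUniformlyToConst T A L ↔
      TendstoUniformly (fun (n : ℕ) ω => (1 / n : ℝ) * cocNorm T A n ω) (fun _ => L) atTop := by
  simp only [TendsUniformlyToConst, Metric.tendstoUniformly_iff, eventually_atTop, Real.dist_eq,
    abs_sub_comm L]

theorem not_isUniformCocycle_expDiag [MeasurableSpace Ω] {T : Ω → Ω} {g : Ω → ℝ}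
    {μ ν : Measure Ω} [IsProbabilityMeasure μ] [IsProbabilityMeasure ν]
    (hμ : MeasurePreserving T μ μ) (hν : MeasurePreserving T ν ν) (hgμ : Integrable g μ)
    (hgν : Integrable g ν) (hg : 0 ≤ g) (h_ne : ∫ ω, g ω ∂μ ≠ ∫ ω, g ω ∂ν) :
    ¬ IsUniformCocycle T (fun ω => expDiag (g ω)) := by
  rintro ⟨L, hL⟩
  have h_avg : TendstoUniformly (birkhoffAverage ℝ T g) (fun _ => L) atTop := by
    rw [tendsUniformlyToConst_iff] at hL
    convert hL using 2 with n
    ext ω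
    rw [one_div_mul_cocNorm_expDiag, abs_of_nonneg]
    exact smul_nonneg (by positivity) (Finset.sum_nonneg fun k _ => hg _)
  exact h_ne ((hμ.integral_eq_of_tendstoUniformly_birkhoffAverage hgμ h_avg).trans
    (hν.integral_eq_of_tendstoUniformly_birkhoffAverage hgν h_avg).symm)

end

theorem exists_uh_not_uniform_general {Ω : Type*} [MetricSpace Ω]
    [MeasurableSpace Ω] [BorelSpace Ω] (T : Ω ≃ₜ Ω)
    (μ ν : Measure Ω) [IsProbabilityMeasure μ] [IsProbabilityMeasure ν]
    (hμ : Ergodic (⇑T) μ) (hν : Ergodic (⇑T) ν) (hμν : μ ≠ ν) :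
    ∃ A : Ω → SL2, Continuous (fun ω => (A ω : Matrix (Fin 2) (Fin 2) ℝ)) ∧
      UniformlyHyperbolic (⇑T) A ∧ ¬ IsUniformCocycle (⇑T) A := by
  obtain ⟨g, hg_one, hg_ne⟩ := exists_boundedContinuousFunction_one_le_integral_ne hμν
  refine ⟨fun ω => expDiag (g ω), continuous_expDiag.comp g.continuous,
    uniformlyHyperbolic_expDiag one_pos hg_one, ?_⟩
  exact not_isUniformCocycle_expDiag hμ.toMeasurePreserving hν.toMeasurePreserving
    (g.integrable μ) (g.integrable ν) (fun ω => zero_le_one.trans (hg_one ω)) hg_ne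

/-- Remark A.2: over any non-uniquely ergodic dynamical system there is a
continuous `SL(2,ℝ)` cocycle that is uniformly hyperbolic but not uniform. -/
theorem exists_uh_not_uniform {Ω : Type*} [MetricSpace Ω] [CompactSpace Ω]
    [MeasurableSpace Ω] [BorelSpace Ω] (T : Ω ≃ₜ Ω)
    (μ ν : Measure Ω) [IsProbabilityMeasure μ] [IsProbabilityMeasure ν]
    (hμ : Ergodic (⇑T) μ) (hν : Ergodic (⇑T) ν) (hμν : μ ≠ ν) :
    ∃ A : Ω → SL2, Continuous (fun ω => (A ω : Matrix (Fin 2) (Fin 2) ℝ)) ∧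
      UniformlyHyperbolic (⇑T) A ∧ ¬ IsUniformCocycle (⇑T) A :=
  exists_uh_not_uniform_general T μ ν hμ hν hμν
end
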